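/- Near-optimality of joint optimization under a noisy belief oracle: suppose v has inducibility margin D > 0, let C be a finite framing set with belief maps ℓ, ℓ_ε : C → Δ(Ω) satisfying ‖ℓ_ε(c) − ℓ(c)‖₁ ≤ ε for every c ∈ C, and suppose ℓ(c)(ω) ≥ 2p₀ > 0 for every c ∈ C and ω ∈ Ω, where 0 < ε < min{p₀, p₀²D/2}. If c* maximizes U*(ℓ(c)) over c ∈ C and ĉ maximizes U*(ℓ_ε(c)) over c ∈ C, then U*(ℓ_ε(ĉ)) ≥ U*(ℓ_ε(c*)) ≥ U*(ℓ(c*)) − 4ε/(p₀²D); i.e. optimizing against the noisy oracle loses at most 4ε/(p₀²D) in perceived sender utility relative to the true optimum. -/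

import Mathlib

open Finset

/-- The optimal sender utility `U*(μ)` over recommendation schemes obedient for the
receiver prior `μ`, with sender prior `μ₀`. -/
noncomputable def Ustar {Ω 𝒜 : Type*} [Fintype Ω] [Fintype 𝒜]
    (u v : 𝒜 → Ω → ℝ) (μ₀ : Ω → ℝ) (μ : Ω → ℝ) : ℝ :=
  sSup {r : ℝ | ∃ π : Ω → 𝒜 → ℝ,
    (∀ ω a, 0 ≤ π ω a) ∧ (∀ ω, ∑ a, π ω a = 1) ∧
    (∀ a a', 0 ≤ ∑ ω, μ ω * π ω a * (v a ω - v a' ω)) ∧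
    r = ∑ ω, ∑ a, μ₀ ω * π ω a * u a ω}

/-!
Take a scheme `π` obedient for the prior `μ`. Scale its joint distribution `μ(ω) π(a|ω)` by
`1 - c`, where `c = ε / (2 p₀)`, and spend the remaining mass `μ'(ω) - (1 - c) μ(ω) ≥ 0` on
recommending the receiver's best action in state `ω`. The result is obedient for `μ'` and keeps
at least a `(1 - c)²` fraction of `π`, hence of the sender's utility, so
`U*(μ') ≥ U*(μ) - 2c = U*(μ) - ε / p₀`. Since `2 p₀ ≤ 1`, and `D ≤ 1` as soon as there are two
actions, `ε / p₀ ≤ 4 ε / (p₀² D)`. With a single action obedience is vacuous and `U*` does not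
depend on the prior at all.
-/

section Obedience

variable {Ω 𝒜 : Type*} [Fintype Ω] [Fintype 𝒜]

structure IsObedient (v : 𝒜 → Ω → ℝ) (μ : Ω → ℝ) (π : Ω → 𝒜 → ℝ) : Prop where
  mem_stdSimplex : ∀ ω, π ω ∈ stdSimplex ℝ 𝒜
  obedient : ∀ a a', 0 ≤ ∑ ω, μ ω * π ω a * (v a ω - v a' ω)

def senderUtility (u : 𝒜 → Ω → ℝ) (μ₀ : Ω → ℝ) (π : Ω → 𝒜 → ℝ) : ℝ :=
  ∑ ω, ∑ a, μ₀ ω * π ω a * u a ω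

variable {u v : 𝒜 → Ω → ℝ} {μ₀ μ μ' : Ω → ℝ} {π π' : Ω → 𝒜 → ℝ}

theorem Ustar_eq_sSup_image (u v : 𝒜 → Ω → ℝ) (μ₀ μ : Ω → ℝ) :
    Ustar u v μ₀ μ = sSup (senderUtility u μ₀ '' {π | IsObedient v μ π}) := by
  unfold Ustar
  congr 1
  ext r
  constructor
  · rintro ⟨π, h0, h1, hob, rfl⟩
    exact ⟨π, ⟨fun ω => ⟨h0 ω, h1 ω⟩, hob⟩, rfl⟩
  · rintro ⟨π, ⟨hπ, hob⟩, rfl⟩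
    exact ⟨π, fun ω => (hπ ω).1, fun ω => (hπ ω).2, hob, rfl⟩

theorem senderUtility_nonneg (hu : ∀ a ω, 0 ≤ u a ω) (hμ₀ : ∀ ω, 0 ≤ μ₀ ω)
    (hπ : ∀ ω a, 0 ≤ π ω a) : 0 ≤ senderUtility u μ₀ π :=
  sum_nonneg fun ω _ => sum_nonneg fun a _ => mul_nonneg (mul_nonneg (hμ₀ ω) (hπ ω a)) (hu a ω)

theorem senderUtility_le_one (hu : ∀ a ω, u a ω ≤ 1) (hμ₀ : μ₀ ∈ stdSimplex ℝ Ω)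
    (hπ : ∀ ω, π ω ∈ stdSimplex ℝ 𝒜) : senderUtility u μ₀ π ≤ 1 :=
  calc senderUtility u μ₀ π ≤ ∑ ω, ∑ a, μ₀ ω * π ω a * 1 := by
        unfold senderUtility
        gcongr with ω _ a _
        · exact mul_nonneg (hμ₀.1 ω) ((hπ ω).1 a)
        · exact hu a ω
    _ = 1 := by simp only [mul_one, ← mul_sum, (hπ _).2, hμ₀.2]

theorem senderUtility_mono (hu : ∀ a ω, 0 ≤ u a ω) (hμ₀ : ∀ ω, 0 ≤ μ₀ ω)
    (h : ∀ ω a, π ω a ≤ π' ω a) : senderUtility u μ₀ π ≤ senderUtility u μ₀ π' := by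
  unfold senderUtility
  gcongr with ω _ a _
  · exact hu a ω
  · exact hμ₀ ω
  · exact h ω a

theorem senderUtility_smul (u : 𝒜 → Ω → ℝ) (μ₀ : Ω → ℝ) (t : ℝ) (π : Ω → 𝒜 → ℝ) :
    senderUtility u μ₀ (t • π) = t * senderUtility u μ₀ π := by
  simp only [senderUtility, mul_sum, Pi.smul_apply, smul_eq_mul]
  congr! 2
  ring

theorem le_Ustar (hu : ∀ a ω, u a ω ∈ Set.Icc (0 : ℝ) 1) (hμ₀ : μ₀ ∈ stdSimplex ℝ Ω)
    (hπ : IsObedient v μ π) : senderUtility u μ₀ π ≤ Ustar u v μ₀ μ := by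
  rw [Ustar_eq_sSup_image]
  refine le_csSup ⟨1, ?_⟩ ⟨π, hπ, rfl⟩
  rintro _ ⟨π, hπ, rfl⟩
  exact senderUtility_le_one (fun a ω => (hu a ω).2) hμ₀ hπ.mem_stdSimplex

theorem Ustar_le {b : ℝ} (hne : ∃ π, IsObedient v μ π)
    (h : ∀ π, IsObedient v μ π → senderUtility u μ₀ π ≤ b) : Ustar u v μ₀ μ ≤ b := by
  rw [Ustar_eq_sSup_image]
  exact csSup_le (Set.Nonempty.image _ hne) (Set.forall_mem_image.2 h)

theorem isObedient_iff_of_subsingleton [Subsingleton 𝒜] :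
    IsObedient v μ π ↔ ∀ ω, π ω ∈ stdSimplex ℝ 𝒜 := by
  refine ⟨IsObedient.mem_stdSimplex, fun hπ => ⟨hπ, fun a a' => ?_⟩⟩
  simp [Subsingleton.elim a' a]

theorem Ustar_eq_of_subsingleton [Subsingleton 𝒜] (u v : 𝒜 → Ω → ℝ) (μ₀ μ μ' : Ω → ℝ) :
    Ustar u v μ₀ μ = Ustar u v μ₀ μ' := by
  simp only [Ustar_eq_sSup_image, isObedient_iff_of_subsingleton]

theorem IsObedient.smul_prior (hπ : IsObedient v μ π) {t : ℝ} (ht : 0 ≤ t) :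
    IsObedient v (t • μ) π := by
  refine ⟨hπ.mem_stdSimplex, fun a a' => ?_⟩
  have := mul_nonneg ht (hπ.obedient a a')
  simpa only [mul_sum, Pi.smul_apply, smul_eq_mul, mul_assoc] using this

-- Obedience is linear in the joint distribution `μ(ω) π(a|ω)`; this scheme adds the two.
theorem IsObedient.mix {μ₁ μ₂ : Ω → ℝ} {π₁ π₂ : Ω → 𝒜 → ℝ}
    (h₁ : IsObedient v μ₁ π₁) (h₂ : IsObedient v μ₂ π₂) (hμ₁ : ∀ ω, 0 ≤ μ₁ ω)
    (hμ₂ : ∀ ω, 0 ≤ μ₂ ω) (hpos : ∀ ω, 0 < (μ₁ + μ₂) ω) :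
    IsObedient v (μ₁ + μ₂)
      (fun ω => (μ₁ ω / (μ₁ + μ₂) ω) • π₁ ω + (μ₂ ω / (μ₁ + μ₂) ω) • π₂ ω) := by
  refine ⟨fun ω => convex_iff_div.1 (convex_stdSimplex ℝ 𝒜) (h₁.mem_stdSimplex ω)
    (h₂.mem_stdSimplex ω) (hμ₁ ω) (hμ₂ ω) (hpos ω), fun a a' => ?_⟩
  have hsplit : ∀ ω, (μ₁ + μ₂) ω *
      ((μ₁ ω / (μ₁ + μ₂) ω) • π₁ ω + (μ₂ ω / (μ₁ + μ₂) ω) • π₂ ω) a * (v a ω - v a' ω) =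
      μ₁ ω * π₁ ω a * (v a ω - v a' ω) + μ₂ ω * π₂ ω a * (v a ω - v a' ω) := by
    intro ω
    have := (hpos ω).ne'
    simp only [Pi.add_apply, Pi.smul_apply, smul_eq_mul] at this ⊢
    field_simp
  rw [sum_congr rfl fun ω _ => hsplit ω, sum_add_distrib]
  exact add_nonneg (h₁.obedient a a') (h₂.obedient a a')

theorem exists_isObedient [Nonempty 𝒜] (hμ : ∀ ω, 0 ≤ μ ω) : ∃ π, IsObedient v μ π := by
  classical
  choose b hb using fun ω => Finite.exists_max fun a => v a ω
  refine ⟨fun ω => Pi.single (b ω) 1, fun ω => single_mem_stdSimplex ℝ _,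
    fun a a' => sum_nonneg fun ω _ => ?_⟩
  rcases eq_or_ne a (b ω) with rfl | ha
  · simpa using mul_nonneg (hμ ω) (sub_nonneg.2 (hb ω a'))
  · simp [ha]

theorem IsObedient.exists_smul_le [Nonempty 𝒜] (hπ : IsObedient v μ π) (hμ : ∀ ω, 0 ≤ μ ω)
    {s t : ℝ} (ht : 0 ≤ t) (hle : ∀ ω, t * μ ω ≤ μ' ω) (hpos : ∀ ω, 0 < μ' ω)
    (hs : ∀ ω, s * μ' ω ≤ t * μ ω) :
    ∃ π', IsObedient v μ' π' ∧ ∀ ω a, s * π ω a ≤ π' ω a := by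
  have hrest : ∀ ω, 0 ≤ (μ' - t • μ) ω := fun ω => sub_nonneg.2 (hle ω)
  obtain ⟨ρ, hρ⟩ := exists_isObedient (v := v) hrest
  have hsum : t • μ + (μ' - t • μ) = μ' := add_sub_cancel _ _
  have hmix := (hπ.smul_prior ht).mix hρ (fun ω => mul_nonneg ht (hμ ω)) hrest
    (by rw [hsum]; exact hpos)
  rw [hsum] at hmix
  refine ⟨_, hmix, fun ω a => ?_⟩
  have hsπ : s * π ω a ≤ (t * μ ω / μ' ω) * π ω a :=
    mul_le_mul_of_nonneg_right ((le_div_iff₀ (hpos ω)).2 (hs ω)) ((hπ.mem_stdSimplex ω).1 a)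
  have hρ0 : 0 ≤ ((μ' - t • μ) ω / μ' ω) * ρ ω a :=
    mul_nonneg (div_nonneg (hrest ω) (hpos ω).le) ((hρ.mem_stdSimplex ω).1 a)
  simp only [Pi.add_apply, Pi.smul_apply, smul_eq_mul] at hsπ hρ0 ⊢
  linarith

theorem Ustar_le_Ustar_add_of_abs_sub_le [Nonempty 𝒜]
    (hu : ∀ a ω, u a ω ∈ Set.Icc (0 : ℝ) 1) (hμ₀ : μ₀ ∈ stdSimplex ℝ Ω) {m ε : ℝ}
    (hε : 0 ≤ ε) (hεm : ε < m) (hμ : ∀ ω, m ≤ μ ω) (hμμ' : ∀ ω, |μ' ω - μ ω| ≤ ε) :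
    Ustar u v μ₀ μ ≤ Ustar u v μ₀ μ' + 2 * ε / m := by
  have hm : 0 < m := hε.trans_lt hεm
  set c := ε / m with hc
  have hc0 : 0 ≤ c := by positivity
  have hc1 : c < 1 := (div_lt_one hm).2 hεm
  have hεc : ∀ ω, ε ≤ c * μ ω := fun ω =>
    calc ε = c * m := by rw [hc, div_mul_cancel₀ _ hm.ne']
      _ ≤ c * μ ω := mul_le_mul_of_nonneg_left (hμ ω) hc0
  have hμ0 : ∀ ω, 0 ≤ μ ω := fun ω => hm.le.trans (hμ ω)
  have hlo : ∀ ω, μ ω - ε ≤ μ' ω := fun ω => by linarith [(abs_le.1 (hμμ' ω)).1]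
  have hhi : ∀ ω, μ' ω ≤ μ ω + ε := fun ω => by linarith [(abs_le.1 (hμμ' ω)).2]
  have hshrink : ∀ ω, (1 - c) * μ' ω ≤ μ ω := fun ω => by
    nlinarith [hεc ω, hhi ω, mul_nonneg hc0 (mul_nonneg hc0 (hμ0 ω))]
  refine Ustar_le (exists_isObedient hμ0) fun π hπ => ?_
  obtain ⟨π', hπ', hππ'⟩ := hπ.exists_smul_le (μ' := μ') (s := (1 - c) ^ 2) (t := 1 - c)
    hμ0 (by linarith) (fun ω => by linarith [hεc ω, hlo ω])
    (fun ω => by linarith [hεc ω, hlo ω, hμ ω])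
    (fun ω => by nlinarith [hshrink ω])
  have hu0 : ∀ a ω, 0 ≤ u a ω := fun a ω => (hu a ω).1
  have hR0 := senderUtility_nonneg hu0 hμ₀.1 fun ω => (hπ.mem_stdSimplex ω).1
  have hR1 := senderUtility_le_one (fun a ω => (hu a ω).2) hμ₀ hπ.mem_stdSimplex
  have hloss : senderUtility u μ₀ π - 2 * c ≤ senderUtility u μ₀ π' :=
    calc senderUtility u μ₀ π - 2 * c ≤ (1 - c) ^ 2 * senderUtility u μ₀ π := by
          nlinarith [mul_nonneg hc0 (sub_nonneg.2 hR1), mul_nonneg (sq_nonneg c) hR0]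
      _ = senderUtility u μ₀ ((1 - c) ^ 2 • π) := (senderUtility_smul ..).symm
      _ ≤ senderUtility u μ₀ π' := senderUtility_mono hu0 hμ₀.1 hππ'
  have h2c : 2 * ε / m = 2 * c := mul_div_assoc _ _ _
  linarith [le_Ustar hu hμ₀ hπ']

end Obedience

theorem inducibility_margin_le_one {Ω 𝒜 : Type*} [Fintype Ω] [Nontrivial 𝒜]
    {v : 𝒜 → Ω → ℝ} {D : ℝ} (hv : ∀ a ω, v a ω ∈ Set.Icc (0 : ℝ) 1)
    (hmargin : ∀ a : 𝒜, ∃ η : Ω → ℝ, (∀ ω, 0 ≤ η ω) ∧ (∑ ω, η ω = 1) ∧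
      ∀ a', a' ≠ a → D ≤ ∑ ω, η ω * (v a ω - v a' ω)) :
    D ≤ 1 := by
  obtain ⟨a, a', ha⟩ := exists_pair_ne 𝒜
  obtain ⟨η, hη0, hη1, hD⟩ := hmargin a
  calc D ≤ ∑ ω, η ω * (v a ω - v a' ω) := hD a' ha.symm
    _ ≤ ∑ ω, η ω * 1 := by
        gcongr with ω
        · exact hη0 ω
        · linarith [(hv a ω).2, (hv a' ω).1]
    _ = 1 := by simp [hη1]

theorem le_one_of_forall_le_of_sum_eq_one {Ω : Type*} [Fintype Ω] [Nonempty Ω] {μ : Ω → ℝ}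
    {m : ℝ} (hm : 0 ≤ m) (h : ∀ ω, m ≤ μ ω) (hsum : ∑ ω, μ ω = 1) : m ≤ 1 := by
  obtain ⟨ω⟩ := ‹Nonempty Ω›
  calc m ≤ μ ω := h ω
    _ ≤ ∑ ω, μ ω := single_le_sum (fun i _ => hm.trans (h i)) (mem_univ ω)
    _ = 1 := hsum

theorem noisy_oracle_joint_near_optimal_general
    {Ω 𝒜 C : Type*} [Fintype Ω] [Fintype 𝒜]
    [Nonempty Ω]
    (u v : 𝒜 → Ω → ℝ)
    (hu : ∀ a ω, u a ω ∈ Set.Icc (0:ℝ) 1)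
    (hv : ∀ a ω, v a ω ∈ Set.Icc (0:ℝ) 1)
    (μ₀ : Ω → ℝ) (hμ₀pos : ∀ ω, 0 < μ₀ ω) (hμ₀sum : ∑ ω, μ₀ ω = 1)
    -- inducibility margin D
    (D : ℝ) (hD : 0 < D)
    (hmargin : ∀ a : 𝒜, ∃ η : Ω → ℝ, (∀ ω, 0 ≤ η ω) ∧ (∑ ω, η ω = 1) ∧
      ∀ a', a' ≠ a → D ≤ ∑ ω, η ω * (v a ω - v a' ω))
    -- belief maps: true oracle ℓ and noisy oracle ℓε
    (ℓ ℓε : C → Ω → ℝ)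
    (hℓsum : ∀ c, ∑ ω, ℓ c ω = 1)
    (p₀ ε : ℝ) (hp₀ : 0 < p₀)
    (hnoise : ∀ c, ∑ ω, |ℓε c ω - ℓ c ω| ≤ ε)
    (hlb : ∀ c ω, 2 * p₀ ≤ ℓ c ω)
    (hε0 : 0 < ε) (hεlt : ε < min p₀ (p₀ ^ 2 * D / 2))
    -- c* maximizes the true objective, ĉ maximizes the perceived objective
    (cstar chat : C)
    (hchat : ∀ c, Ustar u v μ₀ (ℓε c) ≤ Ustar u v μ₀ (ℓε chat)) :
    Ustar u v μ₀ (ℓε cstar) ≤ Ustar u v μ₀ (ℓε chat) ∧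
    Ustar u v μ₀ (ℓ cstar) - 4 * ε / (p₀ ^ 2 * D) ≤ Ustar u v μ₀ (ℓε cstar) := by
  refine ⟨hchat cstar, ?_⟩
  have hloss_nonneg : 0 ≤ 4 * ε / (p₀ ^ 2 * D) := by positivity
  rcases subsingleton_or_nontrivial 𝒜 with h𝒜 | h𝒜
  · rw [Ustar_eq_of_subsingleton u v μ₀ (ℓ cstar) (ℓε cstar)]
    linarith
  have hD1 : D ≤ 1 := inducibility_margin_le_one hv hmargin
  have hp₀half : 2 * p₀ ≤ 1 :=
    le_one_of_forall_le_of_sum_eq_one (by positivity) (hlb cstar) (hℓsum cstar)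
  have hpointwise : ∀ ω, |ℓε cstar ω - ℓ cstar ω| ≤ ε := fun ω =>
    (single_le_sum (f := fun ω => |ℓε cstar ω - ℓ cstar ω|) (fun _ _ => abs_nonneg _)
      (mem_univ ω)).trans (hnoise cstar)
  have hperturb := Ustar_le_Ustar_add_of_abs_sub_le (v := v) hu
    ⟨fun ω => (hμ₀pos ω).le, hμ₀sum⟩ hε0.le (by linarith [min_le_left p₀ (p₀ ^ 2 * D / 2)])
    (hlb cstar) hpointwise
  have hloss : 2 * ε / (2 * p₀) ≤ 4 * ε / (p₀ ^ 2 * D) := by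
    rw [div_le_div_iff₀ (by positivity) (by positivity)]
    nlinarith [mul_le_mul hp₀half hD1 hD.le zero_le_one, mul_pos hε0 hp₀]
  linarith

/-- Near-optimality of joint optimization under a noisy belief oracle:
if `v` has inducibility margin `D > 0`, the true belief map `ℓ` has full support bounded
below by `2p₀`, the noisy oracle `ℓ_ε` is within `ε` of `ℓ` in `ℓ¹`, and
`0 < ε < min{p₀, p₀²D/2}`, then for `c*` maximizing `U*(ℓ(·))` and `ĉ` maximizing
`U*(ℓ_ε(·))` one has `U*(ℓ_ε(ĉ)) ≥ U*(ℓ_ε(c*)) ≥ U*(ℓ(c*)) − 4ε/(p₀²D)`. -/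
theorem noisy_oracle_joint_near_optimal
    {Ω 𝒜 C : Type*} [Fintype Ω] [Fintype 𝒜] [Fintype C]
    [Nonempty Ω] [Nonempty 𝒜] [Nonempty C]
    (u v : 𝒜 → Ω → ℝ)
    (hu : ∀ a ω, u a ω ∈ Set.Icc (0:ℝ) 1)
    (hv : ∀ a ω, v a ω ∈ Set.Icc (0:ℝ) 1)
    (μ₀ : Ω → ℝ) (hμ₀pos : ∀ ω, 0 < μ₀ ω) (hμ₀sum : ∑ ω, μ₀ ω = 1)
    -- inducibility margin D
    (D : ℝ) (hD : 0 < D)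
    (hmargin : ∀ a : 𝒜, ∃ η : Ω → ℝ, (∀ ω, 0 ≤ η ω) ∧ (∑ ω, η ω = 1) ∧
      ∀ a', a' ≠ a → D ≤ ∑ ω, η ω * (v a ω - v a' ω))
    -- belief maps: true oracle ℓ and noisy oracle ℓε
    (ℓ ℓε : C → Ω → ℝ)
    (hℓpos : ∀ c ω, 0 ≤ ℓ c ω) (hℓsum : ∀ c, ∑ ω, ℓ c ω = 1)
    (hℓεpos : ∀ c ω, 0 ≤ ℓε c ω) (hℓεsum : ∀ c, ∑ ω, ℓε c ω = 1)
    (p₀ ε : ℝ) (hp₀ : 0 < p₀)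
    (hnoise : ∀ c, ∑ ω, |ℓε c ω - ℓ c ω| ≤ ε)
    (hlb : ∀ c ω, 2 * p₀ ≤ ℓ c ω)
    (hε0 : 0 < ε) (hεlt : ε < min p₀ (p₀ ^ 2 * D / 2))
    -- c* maximizes the true objective, ĉ maximizes the perceived objective
    (cstar chat : C)
    (hcstar : ∀ c, Ustar u v μ₀ (ℓ c) ≤ Ustar u v μ₀ (ℓ cstar))
    (hchat : ∀ c, Ustar u v μ₀ (ℓε c) ≤ Ustar u v μ₀ (ℓε chat)) :
    Ustar u v μ₀ (ℓε cstar) ≤ Ustar u v μ₀ (ℓε chat) ∧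
    Ustar u v μ₀ (ℓ cstar) - 4 * ε / (p₀ ^ 2 * D) ≤ Ustar u v μ₀ (ℓε cstar) :=
  noisy_oracle_joint_near_optimal_general u v hu hv μ₀ hμ₀pos hμ₀sum D hD hmargin ℓ ℓε hℓsum p₀ ε
    hp₀ hnoise hlb hε0 hεlt cstar chat hchat
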